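/- arXiv:1809.07293 — 7 statements merged into one kernel-verified Lean document; each statement's English description precedes it below -/
import Mathlib

section
/- For integers n > m ≥ 1, the trinomial x^n + a·x^m + b is irreducible as a polynomial in x over the rational function field K(a,b) in two variables over a field K. -/
/-!
The trinomial is monic in `x`, so by Gauss's lemma it suffices to prove irreducibility over
`K[a, b]`. Viewing `K[a, b][x]` as `K[a][x][b]`, the trinomial becomes `b + (x^n + a x^m)`,
which is monic of degree one in `b` and hence irreducible.
-/

open Polynomial Polynomial.Bivariate

theorem Polynomial.monic_X_pow_add_C_mul_X_pow_add_C {R : Type*} [CommRing R] [Nontrivial R]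
    {n m : ℕ} (hmn : m < n) (a b : R) : (X ^ n + C a * X ^ m + C b : R[X]).Monic := by
  monicity!
  simp [hmn.le, hmn.not_ge, (Nat.zero_le m).trans_lt hmn |>.ne']

theorem Polynomial.Bivariate.irreducible_map_C_add_C_X {R : Type*} [CommRing R] [IsDomain R]
    (f : R[X]) : Irreducible (f.map C + C X : R[X][Y]) := by
  rw [← MulEquiv.irreducible_iff (swap (R := R)), map_add, swap_map_C, swap_X, add_comm]
  exact (monic_X_add_C f).irreducible_of_degree_eq_one (degree_X_add_C f)

theorem irreducible_X_pow_add_C_X_mul_X_pow_add_C_X {R : Type*} [CommRing R] [IsDomain R]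
    (n m : ℕ) :
    Irreducible (X ^ n + C (MvPolynomial.X 0) * X ^ m + C (MvPolynomial.X 1) :
      (MvPolynomial (Fin 2) R)[X]) := by
  let e : MvPolynomial (Fin 2) R ≃+* (MvPolynomial (Fin 1) R)[X] :=
    ((MvPolynomial.renameEquiv R (finSuccEquiv' 1)).trans
      (MvPolynomial.optionEquivLeft R (Fin 1))).toRingEquiv
  have he0 : e (MvPolynomial.X 0) = C (MvPolynomial.X 0) := by
    simp [e, show finSuccEquiv' (1 : Fin 2) 0 = some 0 from rfl]
  have he1 : e (MvPolynomial.X 1) = X := by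
    simp [e]
  rw [← MulEquiv.irreducible_iff (mapEquiv e)]
  convert irreducible_map_C_add_C_X
    (X ^ n + C (MvPolynomial.X 0) * X ^ m : (MvPolynomial (Fin 1) R)[X]) using 1
  simp [he0, he1, Polynomial.map_add]

theorem trinomial_irreducible_general (K : Type) [Field K] (n m : ℕ) (hmn : m < n) :
    Irreducible
      (X ^ n +
        C (algebraMap (MvPolynomial (Fin 2) K) (FractionRing (MvPolynomial (Fin 2) K))
            (MvPolynomial.X 0)) * X ^ m +
        C (algebraMap (MvPolynomial (Fin 2) K) (FractionRing (MvPolynomial (Fin 2) K))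
            (MvPolynomial.X 1))) := by
  have h :=
    ((monic_X_pow_add_C_mul_X_pow_add_C hmn _ _).irreducible_iff_irreducible_map_fraction_map
      (K := FractionRing (MvPolynomial (Fin 2) K))).mp
      (irreducible_X_pow_add_C_X_mul_X_pow_add_C_X (R := K) n m)
  simpa [Polynomial.map_add] using h

/-- For integers `n > m ≥ 1`, the trinomial `x^n + a·x^m + b` is irreducible over the
rational function field `K(a,b)` in two variables over a field `K`. -/
theorem trinomial_irreducible (K : Type) [Field K] (n m : ℕ) (hm : 1 ≤ m) (hmn : m < n) :
    Irreducible
      (X ^ n +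
        C (algebraMap (MvPolynomial (Fin 2) K) (FractionRing (MvPolynomial (Fin 2) K))
            (MvPolynomial.X 0)) * X ^ m +
        C (algebraMap (MvPolynomial (Fin 2) K) (FractionRing (MvPolynomial (Fin 2) K))
            (MvPolynomial.X 1))) :=
  trinomial_irreducible_general K n m hmn
end

section
/- For coprime integers n > m ≥ 1, the trinomial x^n + a·x^m + b is a separable polynomial over the rational function field K(a,b). -/
/-!
A common root `θ` of `f = X^n + a X^m + b` and `f'` in an algebraic closure is nonzero since
`b ≠ 0`. Writing `n = k + m`, the derivative gives `n θ^k = -m a`, and then `f(θ) = 0` gives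
`k a θ^m = -n b`; eliminating `θ` yields `k^k (-m)^m a^n = n^n (-b)^k`. As `a` and `b` are
algebraically independent over `K`, both coefficients vanish in `K`, so the characteristic of
`K` divides both `n` and `m`, contradicting `gcd(n, m) = 1`.
-/

open Polynomial

theorem Nat.Coprime.cast_ne_zero_or {n m : ℕ} (R : Type*) [NonAssocSemiring R] [Nontrivial R]
    (h : n.Coprime m) : (n : R) ≠ 0 ∨ (m : R) ≠ 0 := by
  by_contra! ⟨hn, hm⟩
  have : ringChar R ∣ 1 := h ▸ Nat.dvd_gcd ((ringChar.spec R n).1 hn) ((ringChar.spec R m).1 hm)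
  exact CharP.ringChar_ne_one (Nat.dvd_one.1 this)

theorem MvPolynomial.C_mul_X_pow_eq_C_mul_X_pow_iff {σ R : Type*} [CommSemiring R] {i j : σ}
    (hij : i ≠ j) {p q : ℕ} (hp : p ≠ 0) {c d : R} :
    C c * X i ^ p = C d * X j ^ q ↔ c = 0 ∧ d = 0 := by
  have : Finsupp.single i p ≠ Finsupp.single j q := by
    simp [Finsupp.single_eq_single_iff, hij, hp]
  simp [C_mul_X_pow_eq_monomial, monomial_eq_monomial_iff, this]

theorem Polynomial.exists_isRoot_and_isRoot_derivative_of_not_separable {F : Type*} [Field F]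
    {f : F[X]} (h : ¬f.Separable) :
    ∃ θ : AlgebraicClosure F, (f.map (algebraMap F _)).IsRoot θ ∧
      (derivative (f.map (algebraMap F _))).IsRoot θ := by
  rw [Separable, isCoprime_iff_aeval_ne_zero_of_isAlgClosed F (AlgebraicClosure F)] at h
  push Not at h
  obtain ⟨θ, hf, hf'⟩ := h
  rw [aeval_def, eval₂_eq_eval_map] at hf hf'
  exact ⟨θ, hf, by rwa [derivative_map]⟩

/-- This is the vanishing of the factor `n^n B^k - (-1)^n k^k m^m A^n` (`n = k + m`) of the
discriminant of the trinomial. -/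
theorem trinomial_multiple_root_relation {L : Type*} [CommRing L] [IsDomain L] {k m : ℕ}
    (hm : 1 ≤ m) {A B θ : L} (hB : B ≠ 0)
    (hf : (X ^ (k + m) + C A * X ^ m + C B).IsRoot θ)
    (hf' : (derivative (X ^ (k + m) + C A * X ^ m + C B)).IsRoot θ) :
    (k : L) ^ k * (-(m : L)) ^ m * A ^ (k + m) = ((k + m : ℕ) : L) ^ (k + m) * (-B) ^ k := by
  simp only [IsRoot, eval_add, eval_mul, eval_pow, eval_X, eval_C, derivative_add,
    derivative_X_pow, derivative_C_mul, derivative_C, add_zero] at hf hf'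
  have hθ : θ ≠ 0 := by
    rintro rfl
    rw [zero_pow (by omega), zero_pow (by omega), mul_zero, add_zero, zero_add] at hf
    exact hB hf
  have h2 : ((k + m : ℕ) : L) * θ ^ k = -(m * A) := by
    refine mul_right_cancel₀ (pow_ne_zero (m - 1) hθ) ?_
    rw [show k + m - 1 = k + (m - 1) by omega, pow_add] at hf'
    linear_combination hf'
  have h3 : (k : L) * A * θ ^ m = -(((k + m : ℕ) : L) * B) := by
    rw [Nat.cast_add] at h2 ⊢
    linear_combination (↑k + ↑m) * hf - θ ^ m * h2
  have h2m := congrArg (· ^ m) h2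
  have h3k := congrArg (· ^ k) h3
  linear_combination -(k : L) ^ k * A ^ k * h2m + ((k + m : ℕ) : L) ^ m * h3k

theorem trinomial_relation_coeffs_ne_zero {R : Type*} [CommRing R] [IsDomain R] {k m : ℕ}
    (hcop : (k + m).Coprime m) :
    (k : R) ^ k * (-(m : R)) ^ m ≠ 0 ∨ ((k + m : ℕ) : R) ^ (k + m) * (-1) ^ k ≠ 0 := by
  rcases hcop.cast_ne_zero_or R with hn | hm
  · exact .inr (mul_ne_zero (pow_ne_zero _ hn) (pow_ne_zero _ (neg_ne_zero.2 one_ne_zero)))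
  · by_cases hk : (k : R) = 0
    · exact .inr (mul_ne_zero (pow_ne_zero _ (by simpa [hk] using hm))
        (pow_ne_zero _ (neg_ne_zero.2 one_ne_zero)))
    · exact .inl (mul_ne_zero (pow_ne_zero _ hk) (pow_ne_zero _ (neg_ne_zero.2 hm)))

/-- For coprime integers `n > m ≥ 1`, the trinomial `x^n + a·x^m + b` is a separable
polynomial over the rational function field `K(a,b)`. -/
theorem trinomial_separable (K : Type) [Field K] (n m : ℕ) (hm : 1 ≤ m) (hmn : m < n)
    (hcop : Nat.Coprime n m) :
    Polynomial.Separable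
      (X ^ n +
        C (algebraMap (MvPolynomial (Fin 2) K) (FractionRing (MvPolynomial (Fin 2) K))
            (MvPolynomial.X 0)) * X ^ m +
        C (algebraMap (MvPolynomial (Fin 2) K) (FractionRing (MvPolynomial (Fin 2) K))
            (MvPolynomial.X 1))) := by
  obtain ⟨k, rfl⟩ : ∃ k, n = k + m := ⟨n - m, by omega⟩
  set R := MvPolynomial (Fin 2) K
  set F := FractionRing R
  let φ : R →+* AlgebraicClosure F := (algebraMap F _).comp (algebraMap R F)
  have hφ : Function.Injective φ := (algebraMap F _).injective.comp (IsFractionRing.injective R F)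
  by_contra hsep
  obtain ⟨θ, hf, hf'⟩ := exists_isRoot_and_isRoot_derivative_of_not_separable hsep
  simp only [Polynomial.map_add, Polynomial.map_mul, Polynomial.map_pow, map_X, map_C] at hf hf'
  have hB : φ (MvPolynomial.X 1) ≠ 0 := (map_ne_zero_iff φ hφ).2 (MvPolynomial.X_ne_zero 1)
  have hrel := trinomial_multiple_root_relation hm hB hf hf'
  have hmv : (MvPolynomial.C ((k : K) ^ k * (-(m : K)) ^ m) * MvPolynomial.X 0 ^ (k + m) : R)
      = MvPolynomial.C (((k + m : ℕ) : K) ^ (k + m) * (-1) ^ k) * MvPolynomial.X 1 ^ k := by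
    apply hφ
    simp only [map_mul, map_pow, map_neg, map_one, map_natCast]
    linear_combination hrel
  rw [MvPolynomial.C_mul_X_pow_eq_C_mul_X_pow_iff (by decide) (by omega)] at hmv
  exact (trinomial_relation_coeffs_ne_zero hcop).elim (· hmv.1) (· hmv.2)
end

section
/- A primitive permutation group on a finite set of n elements that contains a transposition is the full symmetric group S_n. -/
/-- A permutation group action is primitive if it is transitive and the only blocks are
the trivial ones (subsingletons and the whole set). -/
def IsPrimitiveAction (G : Type*) (Ω : Type*) [Group G] [MulAction G Ω] : Prop :=
  MulAction.IsPretransitive G Ω ∧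
    ∀ B : Set Ω, MulAction.IsBlock G B → B.Subsingleton ∨ B = Set.univ

theorem isPrimitiveAction_iff_isPreprimitive {G Ω : Type*} [Group G] [MulAction G Ω] :
    IsPrimitiveAction G Ω ↔ MulAction.IsPreprimitive G Ω :=
  ⟨fun ⟨hpre, hblock⟩ => { hpre with isTrivialBlock_of_isBlock := hblock _ },
    fun h => ⟨h.toIsPretransitive, fun _ => h.isTrivialBlock_of_isBlock⟩⟩

/-- Jordan's theorem: a primitive permutation group on a finite set containing a
transposition is the full symmetric group. -/
theorem eq_top_of_primitive_of_swap (Ω : Type) [Fintype Ω] [DecidableEq Ω]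
    (G : Subgroup (Equiv.Perm Ω)) (hprim : IsPrimitiveAction G Ω)
    (τ : Equiv.Perm Ω) (hτG : τ ∈ G) (hτ : τ.IsSwap) :
    G = ⊤ :=
  Equiv.Perm.subgroup_eq_top_of_isPreprimitive_of_isSwap_mem
    (isPrimitiveAction_iff_isPreprimitive.mp hprim) τ hτ hτG
end

section
/- Let K be a field, n > m ≥ 1 integers, α ∈ K with α ≠ 0, and suppose 2·n·m·(n−m) ≠ 0 in K. Then (x − α^m)^3 does not divide the polynomial m^m·x^n − (n·α^{n−m}·x − (n−m)·α^n)^m in K[x]; equivalently, α^m is a root of multiplicity exactly 2. -/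
open Polynomial

/-!
If `(X - α^m)^3` divided the restriction `P` of `m^m x^n = y^m` to the tangent line at
`(α^m, α^n)`, then `P''(α^m)` would vanish. But the tangent line takes the value `m α^n` at
`α^m`, and a direct computation gives `P''(α^m) = m^(m-1) n (n-m) α^(m(n-2))`, which is nonzero.
-/

theorem eval_derivative_derivative_linear_pow {R : Type*} [CommRing R] (b d x : R) (m : ℕ) :
    (derivative (derivative ((C b * X - C d) ^ m))).eval x
      = m * (m - 1) * b ^ 2 * (b * x - d) ^ (m - 2) := by
  rcases m with _ | _ | k
  · simp
  · simp
  · simp [derivative_pow]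
    ring

theorem eval_derivative_derivative_X_pow {R : Type*} [CommRing R] (x : R) (n : ℕ) :
    (derivative (derivative (X ^ n : R[X]))).eval x = n * (n - 1) * x ^ (n - 2) := by
  simpa using eval_derivative_derivative_linear_pow 1 0 x n

theorem eval_derivative_derivative_eq_zero_of_pow_three_dvd {R : Type*} [CommRing R] {a : R}
    {p : R[X]} (h : (X - C a) ^ 3 ∣ p) : (derivative (derivative p)).eval a = 0 := by
  rw [← IsRoot, ← dvd_iff_isRoot]
  simpa using pow_sub_dvd_iterate_derivative_of_pow_dvd 2 h

section Tangent

variable {K : Type*} [Field K]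

/-- `m^m x^n - y^m` with `y` the tangent line `m y = n α^(n-m) x - (n-m) α^n` to `x^n = y^m`
at `(α^m, α^n)`. -/
noncomputable def tangentRestriction (n m : ℕ) (α : K) : K[X] :=
  C ((m : K) ^ m) * X ^ n - (C ((n : K) * α ^ (n - m)) * X - C (((n : K) - (m : K)) * α ^ n)) ^ m

theorem tangent_line_eval {n m : ℕ} (hmn : m ≤ n) (α : K) :
    (n : K) * α ^ (n - m) * α ^ m - (n - m) * α ^ n = m * α ^ n := by
  rw [mul_assoc, ← pow_add, Nat.sub_add_cancel hmn]
  ring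

theorem eval_derivative_derivative_tangentRestriction {n m : ℕ} (hm : m ≠ 0) (hmn : m < n)
    (α : K) :
    (derivative (derivative (tangentRestriction n m α))).eval (α ^ m)
      = (m : K) ^ (m - 1) * n * (n - m) * α ^ (m * (n - 2)) := by
  simp only [tangentRestriction, derivative_sub, derivative_C_mul, eval_sub, eval_mul, eval_C,
    eval_derivative_derivative_X_pow, eval_derivative_derivative_linear_pow,
    tangent_line_eval hmn.le]
  obtain ⟨e, rfl⟩ : ∃ e, n = m + (e + 1) := ⟨n - m - 1, by omega⟩
  rcases m with _ | _ | j
  · contradiction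
  · simp
  · simp only [mul_pow, ← pow_mul, Nat.add_sub_cancel_left, Nat.add_sub_cancel,
      show j + 2 + (e + 1) - 2 = j + e + 1 by omega]
    push_cast
    ring

end Tangent

theorem tangent_line_multiplicity_exactly_two_general (K : Type) [Field K] (n m : ℕ)
    (hmn : m < n) (α : K) (hα : α ≠ 0)
    (hchar : (2 : K) * (n : K) * (m : K) * ((n : K) - (m : K)) ≠ 0) :
    ¬ ((X - C (α ^ m)) ^ 3 ∣
      (C ((m : K) ^ m) * X ^ n -
        (C ((n : K) * α ^ (n - m)) * X - C (((n : K) - (m : K)) * α ^ n)) ^ m)) := by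
  intro hdvd
  obtain ⟨⟨⟨-, hn0⟩, hm0⟩, hnm0⟩ := by simpa only [mul_ne_zero_iff] using hchar
  have hm : m ≠ 0 := by rintro rfl; exact hm0 Nat.cast_zero
  have hP : (derivative (derivative (tangentRestriction n m α))).eval (α ^ m) = 0 :=
    eval_derivative_derivative_eq_zero_of_pow_three_dvd hdvd
  rw [eval_derivative_derivative_tangentRestriction hm hmn] at hP
  exact mul_ne_zero (mul_ne_zero (mul_ne_zero (pow_ne_zero _ hm0) hn0) hnm0) (pow_ne_zero _ hα) hP

/-- If `2·n·m·(n−m) ≠ 0` in `K` and `α ≠ 0`, then `α^m` is a root of multiplicity exactly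
two of the restriction of the curve `x^n = y^m` to its tangent line at `(α^m, α^n)`:
the cube `(x − α^m)^3` does not divide the restricted polynomial. -/
theorem tangent_line_multiplicity_exactly_two (K : Type) [Field K] (n m : ℕ) (hm : 1 ≤ m)
    (hmn : m < n) (α : K) (hα : α ≠ 0)
    (hchar : (2 : K) * (n : K) * (m : K) * ((n : K) - (m : K)) ≠ 0) :
    ¬ ((X - C (α ^ m)) ^ 3 ∣
      (C ((m : K) ^ m) * X ^ n -
        (C ((n : K) * α ^ (n - m)) * X - C (((n : K) - (m : K)) * α ^ n)) ^ m)) :=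
  tangent_line_multiplicity_exactly_two_general K n m hmn α hα hchar
end

section
/- In the polynomial ring F_2[a,b][x], the trinomial x^{24} + a·x + b divides the polynomial x^{2048} + b^{64}·x^{512} + a^{80}·b^8·x^{16} + a^{72}·b^{16}·x^8 + a^{89}·x + a^{88}·b + a^{64}·b^{24}. -/
open Polynomial

/-!
Squaring is additive once `2 = 0`, so from `x²⁴ = a x + b` one gets
`x^(24·2ᵏ) = a^(2ᵏ) x^(2ᵏ) + b^(2ᵏ)`. Combining `x²⁰⁴⁸ = x⁵¹² · x¹⁵³⁶` with
`x⁵⁷⁶ = x¹⁹² · x³⁸⁴` and one more use of `x²⁴ = a x + b` expresses `x²⁰⁴⁸` through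
`x⁵¹², x¹⁶, x⁸, x, 1`, which is the required additive relation. Divisibility then
amounts to this relation holding for the root of the trinomial in `AdjoinRoot`.
-/

section TwoEqZero

variable {R : Type*} [CommRing R] (h2 : (2 : R) = 0)
include h2

theorem add_pow_two_pow_of_two_eq_zero (u v : R) (k : ℕ) :
    (u + v) ^ 2 ^ k = u ^ 2 ^ k + v ^ 2 ^ k := by
  induction k with
  | zero => simp
  | succ k ih =>
    rw [pow_succ, pow_mul, pow_mul, pow_mul, ih]
    linear_combination u ^ 2 ^ k * v ^ 2 ^ k * h2

theorem pow_mul_two_pow_eq_of_pow_eq {x a b : R} {n : ℕ} (h : x ^ n = a * x + b) (k : ℕ) :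
    x ^ (n * 2 ^ k) = a ^ 2 ^ k * x ^ 2 ^ k + b ^ 2 ^ k := by
  rw [pow_mul, h, add_pow_two_pow_of_two_eq_zero h2, mul_pow]

theorem linearization_deg24_of_pow_eq {x a b : R} (h : x ^ 24 = a * x + b) :
    x ^ 2048 + b ^ 64 * x ^ 512 + a ^ 80 * b ^ 8 * x ^ 16 + a ^ 72 * b ^ 16 * x ^ 8 +
      a ^ 89 * x + (a ^ 88 * b + a ^ 64 * b ^ 24) = 0 := by
  have h192 := pow_mul_two_pow_eq_of_pow_eq h2 h 3
  have h384 := pow_mul_two_pow_eq_of_pow_eq h2 h 4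
  have h1536 := pow_mul_two_pow_eq_of_pow_eq h2 h 6
  norm_num at h192 h384 h1536
  have h576 : x ^ 576 = a ^ 25 * x + a ^ 24 * b + a ^ 16 * b ^ 8 * x ^ 16 +
      a ^ 8 * b ^ 16 * x ^ 8 + b ^ 24 := by
    linear_combination x ^ 192 * h384 + (a ^ 16 * x ^ 16 + b ^ 16) * h192 + a ^ 24 * h
  linear_combination x ^ 512 * h1536 + a ^ 64 * h576 +
    (b ^ 64 * x ^ 512 + a ^ 80 * b ^ 8 * x ^ 16 + a ^ 72 * b ^ 16 * x ^ 8 + a ^ 89 * x +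
      a ^ 88 * b + a ^ 64 * b ^ 24) * h2

theorem AdjoinRoot.two_eq_zero_of_two_eq_zero (f : R[X]) : (2 : AdjoinRoot f) = 0 := by
  rw [← map_ofNat (AdjoinRoot.of f), h2, map_zero]

theorem AdjoinRoot.root_trinomial_pow_eq (n : ℕ) (a b : R) :
    AdjoinRoot.root (X ^ n + C a * X + C b) ^ n =
      AdjoinRoot.of _ a * AdjoinRoot.root (X ^ n + C a * X + C b) + AdjoinRoot.of _ b := by
  have hf := AdjoinRoot.mk_self (f := X ^ n + C a * X + C b)
  simp only [map_add, map_mul, map_pow, AdjoinRoot.mk_X, AdjoinRoot.mk_C] at hf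
  linear_combination hf - (AdjoinRoot.of _ a * AdjoinRoot.root _ + AdjoinRoot.of _ b) *
    AdjoinRoot.two_eq_zero_of_two_eq_zero h2 (X ^ n + C a * X + C b)

end TwoEqZero

/-- Serre's linearization: in `F₂[a,b][x]` the trinomial `x²⁴ + a·x + b` divides the
additive-plus-constant polynomial
`x²⁰⁴⁸ + b⁶⁴·x⁵¹² + a⁸⁰·b⁸·x¹⁶ + a⁷²·b¹⁶·x⁸ + a⁸⁹·x + a⁸⁸·b + a⁶⁴·b²⁴`. -/
theorem serre_linearization_deg24 :
    ∀ (a b : MvPolynomial (Fin 2) (ZMod 2)),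
      a = MvPolynomial.X 0 → b = MvPolynomial.X 1 →
      (X ^ 24 + C a * X + C b : Polynomial (MvPolynomial (Fin 2) (ZMod 2))) ∣
        (X ^ 2048 + C (b ^ 64) * X ^ 512 + C (a ^ 80 * b ^ 8) * X ^ 16 +
          C (a ^ 72 * b ^ 16) * X ^ 8 + C (a ^ 89) * X + C (a ^ 88 * b + a ^ 64 * b ^ 24)) := by
  intro a b _ _
  have h2 : (2 : MvPolynomial (Fin 2) (ZMod 2)) = 0 := CharTwo.two_eq_zero
  rw [← AdjoinRoot.mk_eq_zero]
  simpa using linearization_deg24_of_pow_eq (AdjoinRoot.two_eq_zero_of_two_eq_zero h2 _)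
    (AdjoinRoot.root_trinomial_pow_eq h2 24 a b)
end

section
/- Let c ∈ F_9 satisfy c² = c + 1. Then the polynomial x^{24} − x + c ∈ F_9[x] factors as a product of six irreducible polynomials over F_9, of degrees 1, 2, 3, 4, 6, and 8. -/
/-!
Rabin's test: an irreducible `g` of degree `d` over a finite field with `q` elements divides
`X ^ q ^ d - X`, so a polynomial of degree `n` that is coprime to `X ^ q ^ d - X` for every
`0 < d ≤ n / 2` has no proper factor and is irreducible. For `q = 9` this is checked by
computation for each of the six factors, after reducing `X ^ 9 ^ d = X ^ 3 ^ (2 d)` modulo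
the factor by repeated cubing and exhibiting an inverse of `X ^ 9 ^ d - X` modulo it. The
computations take place in a model of `𝔽₉[X]` by coefficient lists over `𝔽₃ × 𝔽₃`, whose
evaluation map into `K[X]` sends `(a, b)` to `a + b c` and is multiplicative because
`c ^ 2 = c + 1`.
-/

open Polynomial

theorem Polynomial.irreducible_of_isCoprime_X_pow_card_pow_sub_X {K : Type*} [Field K]
    [Finite K] {f : K[X]} (hf : 0 < f.natDegree)
    (h : ∀ d, 0 < d → 2 * d ≤ f.natDegree → IsCoprime f (X ^ Nat.card K ^ d - X)) :
    Irreducible f := by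
  have hf0 : f ≠ 0 := ne_zero_of_natDegree_gt hf
  have hfu : ¬IsUnit f := fun hu => hf.ne' (natDegree_eq_zero_of_isUnit hu)
  refine (irreducible_iff_degree_lt f hf0 hfu).2 fun q hq hqf => ?_
  by_contra hqu
  have hq0 : q ≠ 0 := ne_zero_of_dvd_ne_zero hf0 hqf
  obtain ⟨g, hg, hgq⟩ := WfDvdMonoid.exists_irreducible_factor hqu hq0
  have hgf : 2 * g.natDegree ≤ f.natDegree := by
    have := (natDegree_le_of_dvd hgq hq0).trans (natDegree_le_of_degree_le hq)
    omega
  exact hg.not_isUnit <| (h _ hg.natDegree_pos hgf).isUnit_of_dvd' (hgq.trans hqf)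
    (hg.natDegree_dvd_iff_dvd_X_pow_card_pow_sub_X.1 dvd_rfl)

/-- `(a, b)` stands for `a + b c`, where `c ^ 2 = c + 1`. It is a type synonym so that the
componentwise multiplication of the product is not in scope. -/
def F9 : Type := ZMod 3 × ZMod 3

namespace F9

instance : AddCommGroup F9 := inferInstanceAs (AddCommGroup (ZMod 3 × ZMod 3))
instance : DecidableEq F9 := inferInstanceAs (DecidableEq (ZMod 3 × ZMod 3))
instance : One F9 := ⟨((1 : ZMod 3), (0 : ZMod 3))⟩
instance : Mul F9 := ⟨fun x y => (x.1 * y.1 + x.2 * y.2, x.1 * y.2 + x.2 * y.1 + x.2 * y.2)⟩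

def inv (x : F9) : F9 := x * x * x * x * x * x * x

def gen : F9 := ((0 : ZMod 3), (1 : ZMod 3))

section lift

variable {R : Type*} [CommRing R] [CharP R 3]

def lift (c : R) : F9 →+ R where
  toFun x := ZMod.castHom (dvd_refl 3) R x.1 + ZMod.castHom (dvd_refl 3) R x.2 * c
  map_zero' := by
    show ZMod.castHom (dvd_refl 3) R 0 + ZMod.castHom (dvd_refl 3) R 0 * c = 0
    simp
  map_add' x y := by
    show ZMod.castHom (dvd_refl 3) R (x.1 + y.1) + ZMod.castHom (dvd_refl 3) R (x.2 + y.2) * c = _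
    rw [map_add, map_add]
    ring

theorem lift_apply (c : R) (a b : ZMod 3) :
    lift c ((a, b) : ZMod 3 × ZMod 3) =
      ZMod.castHom (dvd_refl 3) R a + ZMod.castHom (dvd_refl 3) R b * c :=
  rfl

theorem lift_one (c : R) : lift c 1 = 1 := by
  simp [← show ((1, 0) : ZMod 3 × ZMod 3) = (1 : F9) from rfl, lift_apply]

theorem lift_gen (c : R) : lift c gen = c := by
  simp [gen, lift_apply]

theorem lift_mul {c : R} (hc : c ^ 2 = c + 1) (x y : F9) :
    lift c (x * y) = lift c x * lift c y := by
  obtain ⟨a, b⟩ := x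
  obtain ⟨a', b'⟩ := y
  show lift c ((a * a' + b * b', a * b' + b * a' + b * b') : ZMod 3 × ZMod 3) = _
  simp only [lift_apply, map_add, map_mul]
  linear_combination -(ZMod.castHom (dvd_refl 3) R b * ZMod.castHom (dvd_refl 3) R b') * hc

end lift

end F9

/-- Coefficient lists, lowest degree first; trailing zeros are allowed. -/
abbrev F9Poly : Type := List F9

namespace F9Poly

def add : F9Poly → F9Poly → F9Poly
  | [], q => q
  | p, [] => p
  | a :: p, b :: q => (a + b) :: add p q

def mul : F9Poly → F9Poly → F9Poly
  | [], _ => []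
  | a :: p, q => add (q.map (a * ·)) (0 :: mul p q)

instance : Add F9Poly := ⟨add⟩
instance : Neg F9Poly := ⟨List.map Neg.neg⟩
instance : Sub F9Poly := ⟨fun p q => p + -q⟩
instance : One F9Poly := ⟨[1]⟩
instance : Mul F9Poly := ⟨mul⟩

def x : F9Poly := [0, 1]

def consTrim (a : F9) : F9Poly → F9Poly
  | [] => if a = 0 then [] else [a]
  | p => a :: p

def trim (p : F9Poly) : F9Poly := p.foldr consTrim []

/- Nothing is proved about `quot` and `invMod`: `reduce f p` is congruent to `p` modulo `f`
whatever `quot` returns, and a candidate inverse from `invMod` is only used after checking it.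
A correct `quot` (long division, top coefficients first) just keeps the lists short. -/

def divStep (g : List F9) (li : F9) (qr : List F9 × List F9) (a : F9) : List F9 × List F9 :=
  match qr.2 ++ [a] with
  | [] => qr
  | t :: r => (li * t :: qr.1, List.zipWith (fun u v => u - li * t * v) r g)

def quot (p g : F9Poly) : F9Poly :=
  match g.reverse with
  | [] => []
  | l :: g' => (p.reverse.foldl (divStep g' (F9.inv l)) ([], List.replicate g'.length 0)).1

def reduce (f p : F9Poly) : F9Poly := trim (p - quot p f * f)

/-- Extended Euclid on pairs `(r, v)` with `r ≡ v w` modulo `f`. -/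
def invModAux (f : F9Poly) : ℕ → F9Poly × F9Poly → F9Poly × F9Poly → F9Poly
  | 0, _, _ => []
  | n + 1, (r₀, v₀), (r₁, v₁) =>
    match r₁ with
    | [k] => reduce f (v₁.map (F9.inv k * ·))
    | _ =>
      let q := quot r₀ r₁
      invModAux f n (r₁, v₁) (trim (r₀ - q * r₁), reduce f (v₀ - q * v₁))

def invMod (f w : F9Poly) : F9Poly := invModAux f f.length (f, []) (trim w, 1)

def xPowThreePowMod (f : F9Poly) (k : ℕ) : F9Poly := (fun s => reduce f (s * s * s))^[k] x

def rabinCheck (f : F9Poly) : Bool :=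
  (List.range' 1 ((f.length - 1) / 2)).all fun d =>
    let w := xPowThreePowMod f (2 * d) - x
    reduce f (invMod f w * w) = 1

section toPoly

variable {R : Type*} [CommRing R] [CharP R 3]

noncomputable def toPoly (c : R) : F9Poly → R[X]
  | [] => 0
  | a :: p => C (F9.lift c a) + X * toPoly c p

variable (c : R)

@[simp] theorem toPoly_nil : toPoly c [] = 0 := rfl

@[simp] theorem toPoly_cons (a : F9) (p : F9Poly) :
    toPoly c (a :: p) = C (F9.lift c a) + X * toPoly c p := rfl

theorem toPoly_add (p q : F9Poly) : toPoly c (p + q) = toPoly c p + toPoly c q := by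
  change toPoly c (add p q) = _
  induction p generalizing q with
  | nil => simp [add]
  | cons a p ih =>
    cases q with
    | nil => simp [add]
    | cons b q =>
      simp only [add, toPoly_cons, ih, map_add]
      ring

theorem toPoly_neg (p : F9Poly) : toPoly c (-p) = -toPoly c p := by
  change toPoly c (p.map Neg.neg) = _
  induction p with
  | nil => simp
  | cons a p ih => simp only [List.map_cons, toPoly_cons, ih, map_neg]; ring

theorem toPoly_sub (p q : F9Poly) : toPoly c (p - q) = toPoly c p - toPoly c q := by
  rw [sub_eq_add_neg, ← toPoly_neg, ← toPoly_add]
  rfl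

theorem toPoly_one : toPoly c 1 = 1 := by
  simp [← show [1] = (1 : F9Poly) from rfl, F9.lift_one]

theorem toPoly_x : toPoly c x = X := by
  simp [x, F9.lift_one]

theorem toPoly_trim (p : F9Poly) : toPoly c (trim p) = toPoly c p := by
  induction p with
  | nil => rfl
  | cons a p ih =>
    rw [trim, List.foldr_cons, ← trim, toPoly_cons, ← ih]
    rcases trim p with _ | ⟨b, q⟩
    · by_cases ha : a = 0 <;> simp [consTrim, ha]
    · rfl

theorem toPoly_append_one (p : F9Poly) : toPoly c (p ++ [1]) = toPoly c p + X ^ p.length := by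
  induction p with
  | nil => simp [F9.lift_one]
  | cons a p ih => simp only [List.cons_append, toPoly_cons, ih, List.length_cons]; ring

theorem toPoly_replicate_zero (n : ℕ) : toPoly c (List.replicate n 0) = 0 := by
  induction n with
  | zero => rfl
  | succ n ih => simp [List.replicate_succ, ih]

theorem degree_toPoly_lt (p : F9Poly) : (toPoly c p).degree < p.length := by
  induction p with
  | nil => simp
  | cons a p ih =>
    rw [toPoly_cons, List.length_cons, Nat.cast_succ]
    refine (degree_add_le _ _).trans_lt (max_lt (degree_C_le.trans_lt ?_) ?_)
    · exact WithBot.coe_lt_coe.2 p.length.succ_pos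
    · calc (X * toPoly c p).degree ≤ 1 + (toPoly c p).degree :=
            (degree_mul_le _ _).trans (add_le_add_left degree_X_le _)
        _ < 1 + p.length := WithBot.add_lt_add_left WithBot.one_ne_bot ih
        _ = p.length + 1 := add_comm _ _

theorem natDegree_toPoly {p : F9Poly} (hp : p.getLast? = some 1) :
    (toPoly c p).natDegree = p.length - 1 := by
  have := CharP.nontrivial_of_char_ne_one (R := R) (v := 3) (by norm_num)
  obtain ⟨q, rfl⟩ := List.getLast?_eq_some_iff.1 hp
  rw [toPoly_append_one, natDegree_add_eq_right_of_degree_lt, natDegree_X_pow]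
  · simp
  · exact (degree_toPoly_lt c q).trans_eq (degree_X_pow _).symm

variable {c}

theorem toPoly_map_mul (hc : c ^ 2 = c + 1) (a : F9) (p : F9Poly) :
    toPoly c (p.map (a * ·)) = C (F9.lift c a) * toPoly c p := by
  induction p with
  | nil => simp
  | cons b p ih => simp only [List.map_cons, toPoly_cons, ih, F9.lift_mul hc, map_mul]; ring

theorem toPoly_mul (hc : c ^ 2 = c + 1) (p q : F9Poly) :
    toPoly c (p * q) = toPoly c p * toPoly c q := by
  change toPoly c (mul p q) = _
  induction p with
  | nil => simp [mul]
  | cons a p ih =>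
    rw [mul, ← show _ + _ = add _ _ from rfl, toPoly_add, toPoly_map_mul hc, toPoly_cons, ih,
      toPoly_cons, map_zero, map_zero]
    ring

theorem dvd_toPoly_sub_toPoly_reduce (hc : c ^ 2 = c + 1) (f p : F9Poly) :
    toPoly c f ∣ toPoly c p - toPoly c (reduce f p) :=
  ⟨toPoly c (quot p f), by rw [reduce, toPoly_trim, toPoly_sub, toPoly_mul hc]; ring⟩

theorem dvd_X_pow_three_pow_sub_toPoly_xPowThreePowMod (hc : c ^ 2 = c + 1) (f : F9Poly)
    (k : ℕ) : toPoly c f ∣ X ^ 3 ^ k - toPoly c (xPowThreePowMod f k) := by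
  induction k with
  | zero => simp [xPowThreePowMod, toPoly_x]
  | succ k ih =>
    set s := xPowThreePowMod f k
    have hcube := dvd_toPoly_sub_toPoly_reduce hc f (s * s * s)
    rw [toPoly_mul hc, toPoly_mul hc] at hcube
    have hpow := ih.trans (sub_dvd_pow_sub_pow _ _ 3)
    rw [xPowThreePowMod, Function.iterate_succ_apply', ← xPowThreePowMod, pow_succ, pow_mul]
    convert hpow.add hcube using 1
    ring

theorem isCoprime_toPoly_of_reduce_mul_eq_one (hc : c ^ 2 = c + 1) {f v w : F9Poly}
    (h : reduce f (v * w) = 1) : IsCoprime (toPoly c f) (toPoly c w) := by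
  obtain ⟨t, ht⟩ := dvd_toPoly_sub_toPoly_reduce hc f (v * w)
  rw [h, toPoly_one, toPoly_mul hc] at ht
  exact ⟨-t, toPoly c v, by linear_combination ht⟩

end toPoly

theorem irreducible_toPoly_of_rabinCheck {K : Type*} [Field K] [Finite K] [CharP K 3]
    (hK : Nat.card K = 9) {c : K} (hc : c ^ 2 = c + 1) {f : F9Poly}
    (hf : f.getLast? = some 1) (hlen : 2 ≤ f.length) (h : rabinCheck f = true) :
    Irreducible (toPoly c f) := by
  have hdeg := natDegree_toPoly c hf
  refine irreducible_of_isCoprime_X_pow_card_pow_sub_X (by omega) fun d hd hdf => ?_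
  have hw := isCoprime_toPoly_of_reduce_mul_eq_one hc <| of_decide_eq_true <|
    List.all_eq_true.1 h d (List.mem_range'_1.2 ⟨hd, by omega⟩)
  rw [toPoly_sub, toPoly_x] at hw
  obtain ⟨t, ht⟩ := dvd_X_pow_three_pow_sub_toPoly_xPowThreePowMod hc f (2 * d)
  have hsplit : X ^ Nat.card K ^ d - X =
      toPoly c (xPowThreePowMod f (2 * d)) - X + toPoly c f * t := by
    rw [hK, ← ht, pow_mul]
    ring
  rw [hsplit]
  exact hw.add_mul_left_right t

end F9Poly

open F9Poly

/- The factorization was found by a computer algebra system. -/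

def factor₁ : F9Poly := [(2, 2), (1, 0)]
def factor₂ : F9Poly := [(1, 0), (0, 2), (1, 0)]
def factor₃ : F9Poly := [(1, 0), (1, 2), (1, 0), (1, 0)]
def factor₄ : F9Poly := [(1, 2), (1, 0), (0, 1), (2, 2), (1, 0)]
def factor₅ : F9Poly := [(1, 2), (2, 1), (2, 2), (2, 1), (0, 1), (2, 2), (1, 0)]
def factor₆ : F9Poly := [(0, 2), (2, 2), (1, 0), (0, 2), (0, 1), (0, 1), (0, 2), (2, 1), (1, 0)]

theorem prod_factors :
    factor₁ * factor₂ * factor₃ * factor₄ * factor₅ * factor₆ =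
      List.replicate 24 0 ++ [1] - x + [F9.gen] := by
  decide

/-- Let `c ∈ F₉` satisfy `c² = c + 1`. Then `x²⁴ − x + c` factors over `F₉` as a product
of six irreducible polynomials of degrees 1, 2, 3, 4, 6 and 8. -/
theorem factorization_x24_F9 (c : GaloisField 3 2) (hc : c ^ 2 = c + 1) :
    ∃ f₁ f₂ f₃ f₄ f₅ f₆ : (GaloisField 3 2)[X],
      Irreducible f₁ ∧ Irreducible f₂ ∧ Irreducible f₃ ∧
      Irreducible f₄ ∧ Irreducible f₅ ∧ Irreducible f₆ ∧
      f₁.natDegree = 1 ∧ f₂.natDegree = 2 ∧ f₃.natDegree = 3 ∧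
      f₄.natDegree = 4 ∧ f₅.natDegree = 6 ∧ f₆.natDegree = 8 ∧
      (X ^ 24 - X + C c : (GaloisField 3 2)[X]) = f₁ * f₂ * f₃ * f₄ * f₅ * f₆ := by
  have hK : Nat.card (GaloisField 3 2) = 9 := GaloisField.card 3 2 two_ne_zero
  have certified (f : F9Poly) (hf : f.getLast? = some 1) (hlen : 2 ≤ f.length)
      (h : rabinCheck f = true) := irreducible_toPoly_of_rabinCheck hK hc hf hlen h
  refine ⟨toPoly c factor₁, toPoly c factor₂, toPoly c factor₃, toPoly c factor₄,
    toPoly c factor₅, toPoly c factor₆,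
    certified _ rfl (by decide) (by decide), certified _ rfl (by decide) (by decide),
    certified _ rfl (by decide) (by decide), certified _ rfl (by decide) (by decide),
    certified _ rfl (by decide) (by decide), certified _ rfl (by decide) (by decide),
    natDegree_toPoly c rfl, natDegree_toPoly c rfl, natDegree_toPoly c rfl,
    natDegree_toPoly c rfl, natDegree_toPoly c rfl, natDegree_toPoly c rfl, ?_⟩
  simp only [← toPoly_mul hc, prod_factors, toPoly_add, toPoly_sub, toPoly_append_one,
    toPoly_replicate_zero, toPoly_x, List.length_replicate, toPoly_cons, toPoly_nil,
    F9.lift_gen]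
  ring
end

section
/- The only solution in integers g ≥ 0, k ≥ 0 of the equation 3·(2^g + 1) = 2^k − 1 is g = 2, k = 4. -/
/-! The equation is `2^k = 3·2^g + 4`. Since `2^k ≥ 7` forces `k ≥ 3`, reducing modulo 8 gives
`3·2^g ≡ 4`, i.e. `2^g ≡ 4 (mod 8)`, which singles out `g = 2`; then `2^k = 16`. -/

theorem two_pow_mod_eight_eq_four_iff {g : ℕ} : 2 ^ g % 8 = 4 ↔ g = 2 := by
  refine ⟨fun h => ?_, fun h => by subst h; rfl⟩
  match g, h with
  | 2, _ => rfl
  | g + 3, h => simp [pow_add, Nat.mul_mod_left] at h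

theorem eq_of_two_pow_eq_three_mul_two_pow_add_four {g k : ℕ} (h : 2 ^ k = 3 * 2 ^ g + 4) :
    g = 2 ∧ k = 4 := by
  have hk : 3 ≤ k := by
    by_contra! hk
    interval_cases k <;> simp at h
  have h8 : 8 ∣ 2 ^ k := dvd_trans (by norm_num) (Nat.pow_dvd_pow 2 hk)
  have hg : g = 2 := two_pow_mod_eight_eq_four_iff.mp (by omega)
  subst hg
  exact ⟨rfl, Nat.pow_right_injective le_rfl (by simpa using h)⟩

/-- The only solution in natural numbers of `3·(2^g + 1) = 2^k − 1` is `g = 2`, `k = 4`. -/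
theorem unique_solution_pow_two (g k : ℕ) :
    3 * (2 ^ g + 1) = 2 ^ k - 1 ↔ g = 2 ∧ k = 4 := by
  constructor
  · intro h
    have : 1 ≤ 2 ^ k := Nat.one_le_two_pow
    exact eq_of_two_pow_eq_three_mul_two_pow_add_four (by omega)
  · rintro ⟨rfl, rfl⟩
    norm_num
end
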